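/- arXiv:0708.3730 — 3 statements merged into one kernel-verified Lean document; each statement's English description precedes it below -/
import Mathlib

section
/- Let V₁, …, V_d and W be C² vector fields on ℝ^e, let f = (f¹, …, f^d) : [0,T] → ℝ^d be C¹, let y : [0,T] → ℝ^e be a solution of the controlled ODE dy = Σᵢ Vᵢ(y) df^i started at y₀, and let J : [0,T] → L(ℝ^e, ℝ^e) be a differentiable path with J(0) = id satisfying the backward Jacobian equation J′(t) = −J(t) ∘ (Σ_{i=1}^d (f^i)′(t) (DVᵢ)(y(t))). Then for every t ∈ [0,T]: J(t)(W(y(t))) = W(y₀) + Σ_{i=1}^d [Vᵢ, W](y₀) · (f^i(t) − f^i(0)) + Σ_{i=1}^d Σ_{j=1}^d ∫₀ᵗ (f^i)′(s) ( ∫₀ˢ (f^j)′(r) · J(r)([Vⱼ, [Vᵢ, W]](y(r))) dr ) ds. -/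
open Set

/-! Differentiating `t ↦ J(t)(B(y(t)))` along the flow turns `B` into `Σᵢ (fⁱ)′ [Vᵢ, B]`:
the term `J′ (B ∘ y) = −J (Σᵢ (fⁱ)′ DVᵢ B)` cancels against part of `J (DB y′)`. Integrating,
`J(t)(B(y(t))) = B(y₀) + ∫₀ᵗ Σᵢ (fⁱ)′(s) J(s)([Vᵢ, B](y(s))) ds` for every `C¹` field `B`.
Applying this to `B = W`, and then once more inside the integral to each `B = [Vᵢ, W]`, gives
the expansion. -/

noncomputable def lieB {e : ℕ} (V W : (Fin e → ℝ) → (Fin e → ℝ)) (x : Fin e → ℝ) :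
    Fin e → ℝ :=
  fderiv ℝ W x (V x) - fderiv ℝ V x (W x)

theorem integral_eq_sub_of_hasDerivWithinAt_Icc {E : Type*} [NormedAddCommGroup E]
    [NormedSpace ℝ E] [CompleteSpace E] {a b t : ℝ} {g g' : ℝ → E}
    (hg : ∀ s ∈ Icc a b, HasDerivWithinAt g (g' s) (Icc a b) s)
    (hg' : ContinuousOn g' (Icc a b)) (ht : t ∈ Icc a b) :
    ∫ s in a..t, g' s = g t - g a := by
  have hsub : Icc a t ⊆ Icc a b := Icc_subset_Icc_right ht.2
  refine intervalIntegral.integral_eq_sub_of_hasDeriv_right_of_le ht.1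
    (fun s hs => (hg s (hsub hs)).continuousWithinAt.mono hsub) (fun s hs => ?_)
    (hg'.mono (uIcc_of_le ht.1 ▸ hsub)).intervalIntegrable
  exact ((hg s (Ioo_subset_Icc_self.trans hsub hs)).hasDerivAt
    (Icc_mem_nhds hs.1 (hs.2.trans_le ht.2))).hasDerivWithinAt

theorem integral_sum_smul_add_integral_sum {ι κ E : Type*} [Fintype ι] [Fintype κ]
    [NormedAddCommGroup E] [NormedSpace ℝ E] [CompleteSpace E] {a b : ℝ} (hab : a ≤ b)
    {φ : ι → ℝ → ℝ} {c : ι → E} {G : ι → κ → ℝ → E}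
    (hφ : ∀ i, ContinuousOn (φ i) (Icc a b)) (hG : ∀ i j, ContinuousOn (G i j) (Icc a b)) :
    ∫ s in a..b, ∑ i, φ i s • (c i + ∫ r in a..s, ∑ j, G i j r)
      = ∑ i, (∫ s in a..b, φ i s) • c i
        + ∑ i, ∑ j, ∫ s in a..b, φ i s • ∫ r in a..s, G i j r := by
  have hint : ∀ {F : ℝ → E}, ContinuousOn F (Icc a b) →
      IntervalIntegrable F MeasureTheory.volume a b :=
    fun hF => (uIcc_of_le hab ▸ hF).intervalIntegrable
  have hprim : ∀ i j, ContinuousOn (fun s => ∫ r in a..s, G i j r) (Icc a b) := fun i j =>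
    uIcc_of_le hab ▸ intervalIntegral.continuousOn_primitive_interval
      ((uIcc_of_le hab ▸ hG i j).integrableOn_Icc)
  have hsplit : ∀ s ∈ uIcc a b, ∑ i, φ i s • (c i + ∫ r in a..s, ∑ j, G i j r)
      = ∑ i, (φ i s • c i + ∑ j, φ i s • ∫ r in a..s, G i j r) := by
    intro s hs
    rw [uIcc_of_le hab] at hs
    refine Finset.sum_congr rfl fun i _ => ?_
    rw [intervalIntegral.integral_finsetSum fun j _ =>
      ((hG i j).mono (Icc_subset_Icc_right hs.2)).intervalIntegrable_of_Icc hs.1,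
      smul_add, Finset.smul_sum]
  have hterm : ∀ i j, ContinuousOn (fun s => φ i s • ∫ r in a..s, G i j r) (Icc a b) :=
    fun i j => (hφ i).smul (hprim i j)
  have hconst : ∀ i, IntervalIntegrable (fun s => φ i s • c i) MeasureTheory.volume a b :=
    fun i => hint ((hφ i).smul continuousOn_const)
  have hsum : ∀ i, IntervalIntegrable (fun s => ∑ j, φ i s • ∫ r in a..s, G i j r)
      MeasureTheory.volume a b :=
    fun i => hint (continuousOn_finsetSum _ fun j _ => hterm i j)
  rw [intervalIntegral.integral_congr hsplit,
    intervalIntegral.integral_finsetSum fun i _ => (hconst i).add (hsum i),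
    ← Finset.sum_add_distrib]
  refine Finset.sum_congr rfl fun i _ => ?_
  rw [intervalIntegral.integral_add (hconst i) (hsum i), intervalIntegral.integral_smul_const,
    intervalIntegral.integral_finsetSum fun j _ => hint (hterm i j)]

theorem contDiff_lieB {e : ℕ} {n : WithTop ℕ∞} {V W : (Fin e → ℝ) → (Fin e → ℝ)}
    (hV : ContDiff ℝ (n + 1) V) (hW : ContDiff ℝ (n + 1) W) : ContDiff ℝ n (lieB V W) :=
  ((hW.fderiv_right le_rfl).clm_apply (hV.of_le le_self_add)).sub
    ((hV.fderiv_right le_rfl).clm_apply (hW.of_le le_self_add))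

theorem continuous_lieB {e : ℕ} {V W : (Fin e → ℝ) → (Fin e → ℝ)}
    (hV : ContDiff ℝ 1 V) (hW : ContDiff ℝ 1 W) : Continuous (lieB V W) :=
  (contDiff_lieB (n := 0) (by simpa using hV) (by simpa using hW)).continuous

section Jacobian

variable {d e : ℕ} {V : Fin d → (Fin e → ℝ) → (Fin e → ℝ)} {f' : ℝ → Fin d → ℝ}
  {y : ℝ → Fin e → ℝ} {J : ℝ → (Fin e → ℝ) →L[ℝ] (Fin e → ℝ)} {B : (Fin e → ℝ) → (Fin e → ℝ)}

theorem hasDerivWithinAt_jacobian_apply {s : Set ℝ} {t : ℝ}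
    (hy : HasDerivWithinAt y (∑ i, f' t i • V i (y t)) s t)
    (hJ : HasDerivWithinAt J (-(J t).comp (∑ i, f' t i • fderiv ℝ (V i) (y t))) s t)
    (hB : DifferentiableAt ℝ B (y t)) :
    HasDerivWithinAt (fun r => J r (B (y r))) (∑ i, f' t i • J t (lieB (V i) B (y t))) s t := by
  refine (hJ.clm_apply (hB.hasFDerivAt.comp_hasDerivWithinAt t hy)).congr_deriv ?_
  simp only [lieB, map_sub, map_smul, map_sum, neg_apply, Function.comp_apply,
    ContinuousLinearMap.comp_apply, FunLike.coe_sum, FunLike.coe_smul,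
    Finset.sum_apply, Pi.smul_apply, smul_sub, Finset.sum_sub_distrib]
  abel

theorem continuousOn_smul_jacobian_apply {s : Set ℝ} (hf' : ContinuousOn f' s)
    (hy : ContinuousOn y s) (hJ : ContinuousOn J s) (hB : Continuous B) (i : Fin d) :
    ContinuousOn (fun r => f' r i • J r (B (y r))) s :=
  ((continuous_apply i).comp_continuousOn hf').smul (hJ.clm_apply (hB.comp_continuousOn hy))

theorem jacobian_apply_eq_add_integral {a b t : ℝ} (hV : ∀ i, ContDiff ℝ 1 (V i))
    (hB : ContDiff ℝ 1 B) (hf' : ContinuousOn f' (Icc a b))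
    (hy : ∀ t ∈ Icc a b, HasDerivWithinAt y (∑ i, f' t i • V i (y t)) (Icc a b) t)
    (hJ : ∀ t ∈ Icc a b,
      HasDerivWithinAt J (-(J t).comp (∑ i, f' t i • fderiv ℝ (V i) (y t))) (Icc a b) t)
    (ht : t ∈ Icc a b) :
    J t (B (y t)) = J a (B (y a)) + ∫ s in a..t, ∑ i, f' s i • J s (lieB (V i) B (y s)) := by
  have hyc : ContinuousOn y (Icc a b) := fun s hs => (hy s hs).continuousWithinAt
  have hJc : ContinuousOn J (Icc a b) := fun s hs => (hJ s hs).continuousWithinAt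
  refine eq_add_of_sub_eq' (integral_eq_sub_of_hasDerivWithinAt_Icc (fun s hs =>
    hasDerivWithinAt_jacobian_apply (hy s hs) (hJ s hs) (hB.differentiable one_ne_zero _))
    ?_ ht).symm
  exact continuousOn_finsetSum _ fun i _ => continuousOn_smul_jacobian_apply hf' hyc hJc
    (continuous_lieB (hV i) hB) i

end Jacobian

theorem stmt2_general {d e : ℕ} {T : ℝ}
    (V : Fin d → (Fin e → ℝ) → (Fin e → ℝ)) (W : (Fin e → ℝ) → (Fin e → ℝ))
    (hV : ∀ i, ContDiff ℝ 2 (V i)) (hW : ContDiff ℝ 2 W)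
    (f f' : ℝ → Fin d → ℝ)
    (hf : ∀ t ∈ Icc (0 : ℝ) T, HasDerivWithinAt f (f' t) (Icc 0 T) t)
    (hf' : ContinuousOn f' (Icc 0 T))
    (y₀ : Fin e → ℝ) (y : ℝ → Fin e → ℝ) (hy0 : y 0 = y₀)
    (hy : ∀ t ∈ Icc (0 : ℝ) T,
      HasDerivWithinAt y (∑ i, f' t i • V i (y t)) (Icc 0 T) t)
    (J : ℝ → (Fin e → ℝ) →L[ℝ] (Fin e → ℝ))
    (hJ0 : J 0 = ContinuousLinearMap.id ℝ (Fin e → ℝ))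
    (hJ : ∀ t ∈ Icc (0 : ℝ) T,
      HasDerivWithinAt J (-(J t).comp (∑ i, f' t i • fderiv ℝ (V i) (y t))) (Icc 0 T) t) :
    ∀ t ∈ Icc (0 : ℝ) T,
      J t (W (y t)) =
        W y₀ + (∑ i, (f t i - f 0 i) • lieB (V i) W y₀)
          + ∑ i, ∑ j, ∫ s in (0 : ℝ)..t,
              f' s i • ∫ r in (0 : ℝ)..s,
                f' r j • J r (lieB (V j) (lieB (V i) W) (y r)) := by
  intro t ht
  have hV1 : ∀ i, ContDiff ℝ 1 (V i) := fun i => (hV i).of_le one_le_two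
  have hVW : ∀ i, ContDiff ℝ 1 (lieB (V i) W) := fun i => contDiff_lieB (hV i) hW
  have expand : ∀ B, ContDiff ℝ 1 B → ∀ s ∈ Icc (0 : ℝ) T,
      J s (B (y s)) = B y₀ + ∫ r in (0 : ℝ)..s, ∑ i, f' r i • J r (lieB (V i) B (y r)) :=
    fun B hB s hs => by
      simpa [hy0, hJ0] using jacobian_apply_eq_add_integral hV1 hB hf' hy hJ hs
  have hsub : Icc 0 t ⊆ Icc 0 T := Icc_subset_Icc_right ht.2
  have hyc : ContinuousOn y (Icc 0 t) := fun s hs => (hy s (hsub hs)).continuousWithinAt.mono hsub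
  have hJc : ContinuousOn J (Icc 0 t) := fun s hs => (hJ s (hsub hs)).continuousWithinAt.mono hsub
  have hinner : ∀ s ∈ uIcc 0 t, ∑ i, f' s i • J s (lieB (V i) W (y s))
      = ∑ i, f' s i • (lieB (V i) W y₀ + ∫ r in (0 : ℝ)..s,
          ∑ j, f' r j • J r (lieB (V j) (lieB (V i) W) (y r))) := fun s hs => by
    rw [uIcc_of_le ht.1] at hs
    simp only [expand _ (hVW _) s (hsub hs)]
  rw [expand W (hW.of_le one_le_two) t ht, intervalIntegral.integral_congr hinner,
    integral_sum_smul_add_integral_sum (φ := fun i s => f' s i) ht.1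
      (fun i => (continuous_apply i).comp_continuousOn (hf'.mono hsub))
      (fun i j => continuousOn_smul_jacobian_apply (hf'.mono hsub) hyc hJc
        (continuous_lieB (hV1 j) (hVW i)) j),
    add_assoc]
  congr 3 with i
  rw [integral_eq_sub_of_hasDerivWithinAt_Icc (fun s hs => hasDerivWithinAt_pi.1 (hf s hs) i)
    ((continuous_apply i).comp_continuousOn hf') ht]

/-- Second-order Taylor expansion of `t ↦ J(t)(W(y(t)))` along a solution `y` of the
controlled ODE `dy = Σᵢ Vᵢ(y) dfⁱ`, with remainder involving the double brackets
`[Vⱼ, [Vᵢ, W]]`. -/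
theorem stmt2 {d e : ℕ} (hd : 1 ≤ d) (he : 1 ≤ e) {T : ℝ} (hT : 0 < T)
    (V : Fin d → (Fin e → ℝ) → (Fin e → ℝ)) (W : (Fin e → ℝ) → (Fin e → ℝ))
    (hV : ∀ i, ContDiff ℝ 2 (V i)) (hW : ContDiff ℝ 2 W)
    (f f' : ℝ → Fin d → ℝ)
    (hf : ∀ t ∈ Icc (0 : ℝ) T, HasDerivWithinAt f (f' t) (Icc 0 T) t)
    (hf' : ContinuousOn f' (Icc 0 T))
    (y₀ : Fin e → ℝ) (y : ℝ → Fin e → ℝ) (hy0 : y 0 = y₀)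
    (hy : ∀ t ∈ Icc (0 : ℝ) T,
      HasDerivWithinAt y (∑ i, f' t i • V i (y t)) (Icc 0 T) t)
    (J : ℝ → (Fin e → ℝ) →L[ℝ] (Fin e → ℝ))
    (hJ0 : J 0 = ContinuousLinearMap.id ℝ (Fin e → ℝ))
    (hJ : ∀ t ∈ Icc (0 : ℝ) T,
      HasDerivWithinAt J (-(J t).comp (∑ i, f' t i • fderiv ℝ (V i) (y t))) (Icc 0 T) t) :
    ∀ t ∈ Icc (0 : ℝ) T,
      J t (W (y t)) =
        W y₀ + (∑ i, (f t i - f 0 i) • lieB (V i) W y₀)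
          + ∑ i, ∑ j, ∫ s in (0 : ℝ)..t,
              f' s i • ∫ r in (0 : ℝ)..s,
                f' r j • J r (lieB (V j) (lieB (V i) W) (y r)) :=
  stmt2_general V W hV hW f f' hf hf' y₀ y hy0 hy J hJ0 hJ
end

section
/- Let V₁, …, V_d and W be C^∞ vector fields on ℝ^e. On the space Z := ℝ^e × L(ℝ^e, ℝ^e) × ℝ^e define for each i ∈ {1, …, d} the vector field V̂ᵢ(z¹, z², z³) := ( Vᵢ(z¹), −z² ∘ (DVᵢ)(z¹), z²([Vᵢ, W](z¹)) ). For a vector field U on Z and a C¹ map g from Z to a normed space, write (U ▷ g)(z) := (Dg)(z)(U(z)) for the directional derivative of g along U, and let pr₃ : Z → ℝ^e denote projection onto the third factor. Then for every N ≥ 1, all indices i₁, …, i_N ∈ {1, …, d}, and every z = (z¹, z², z³) ∈ Z: (V̂_{i₁} ▷ (V̂_{i₂} ▷ ⋯ (V̂_{i_N} ▷ pr₃) ⋯ ))(z) = z²( [V_{i₁}, …, V_{i_N}, W](z¹) ). In particular, at z₀ = (y₀, id, W(y₀)) this iterated directional derivative equals [V_{i₁}, …, V_{i_N}, W](y₀).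 -/
open Set

/-- Iterated Lie brackets: `[V_{i₁}, …, V_{i_k}, W] = [V_{i₁}, [V_{i₂}, …, [V_{i_k}, W]…]]`. -/
noncomputable def iterBracket {d e : ℕ} (V : Fin d → (Fin e → ℝ) → (Fin e → ℝ))
    (W : (Fin e → ℝ) → (Fin e → ℝ)) : List (Fin d) → (Fin e → ℝ) → (Fin e → ℝ)
  | [] => W
  | i :: rest => lieB (V i) (iterBracket V W rest)

/-- The state space `Z = ℝ^e × L(ℝ^e, ℝ^e) × ℝ^e` of the augmented system. -/
abbrev ZSp (e : ℕ) : Type :=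
  (Fin e → ℝ) × ((Fin e → ℝ) →L[ℝ] (Fin e → ℝ)) × (Fin e → ℝ)

/-- The augmented vector fields
`V̂ᵢ(z¹, z², z³) = (Vᵢ(z¹), −z² ∘ (DVᵢ)(z¹), z²([Vᵢ, W](z¹)))` on `Z`. -/
noncomputable def hatV {d e : ℕ} (V : Fin d → (Fin e → ℝ) → (Fin e → ℝ))
    (W : (Fin e → ℝ) → (Fin e → ℝ)) (i : Fin d) (z : ZSp e) : ZSp e :=
  (V i z.1, -(z.2.1.comp (fderiv ℝ (V i) z.1)), z.2.1 (lieB (V i) W z.1))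

/-- Directional derivative of a map `g : Z → ℝ^e` along a vector field `U` on `Z`:
`(U ▷ g)(z) = (Dg)(z)(U(z))`. -/
noncomputable def dirD {e : ℕ} (U : ZSp e → ZSp e) (g : ZSp e → Fin e → ℝ)
    (z : ZSp e) : Fin e → ℝ :=
  fderiv ℝ g z (U z)

/-- Iterated directional derivatives `U_{i₁} ▷ (U_{i₂} ▷ ⋯ (U_{i_N} ▷ g)⋯)`. -/
noncomputable def iterDir {d e : ℕ} (U : Fin d → ZSp e → ZSp e) (g : ZSp e → Fin e → ℝ) :
    List (Fin d) → ZSp e → Fin e → ℝ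
  | [] => g
  | i :: rest => dirD (U i) (iterDir U g rest)

lemma lieB_contDiff {e : ℕ} {V W : (Fin e → ℝ) → (Fin e → ℝ)}
    (hV : ContDiff ℝ (⊤ : ℕ∞) V) (hW : ContDiff ℝ (⊤ : ℕ∞) W) : ContDiff ℝ (⊤ : ℕ∞) (lieB V W) := by
  unfold lieB
  exact ((hW.fderiv_right (by simp)).clm_apply hV).sub
    ((hV.fderiv_right (by simp)).clm_apply hW)

lemma iterBracket_contDiff {d e : ℕ} {V : Fin d → (Fin e → ℝ) → (Fin e → ℝ)}
    {W : (Fin e → ℝ) → (Fin e → ℝ)} (hV : ∀ i, ContDiff ℝ (⊤ : ℕ∞) (V i))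
    (hW : ContDiff ℝ (⊤ : ℕ∞) W) : ∀ l : List (Fin d), ContDiff ℝ (⊤ : ℕ∞) (iterBracket V W l)
  | [] => hW
  | i :: rest => lieB_contDiff (hV i) (iterBracket_contDiff hV hW rest)

lemma dirD_step {d e : ℕ} {V : Fin d → (Fin e → ℝ) → (Fin e → ℝ)}
    (hV : ∀ i, ContDiff ℝ (⊤ : ℕ∞) (V i)) (W : (Fin e → ℝ) → (Fin e → ℝ))
    (i : Fin d) {B : (Fin e → ℝ) → (Fin e → ℝ)} (hB : ContDiff ℝ (⊤ : ℕ∞) B)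
    (z : ZSp e) :
    dirD (hatV V W i) (fun z => z.2.1 (B z.1)) z = z.2.1 (lieB (V i) B z.1) := by
  let X := Fin e → ℝ
  let L := X →L[ℝ] X
  set P1 : ZSp e →L[ℝ] X := ContinuousLinearMap.fst ℝ X (L × X)
  set P21 : ZSp e →L[ℝ] L :=
    (ContinuousLinearMap.fst ℝ L X).comp (ContinuousLinearMap.snd ℝ X (L × X))
  have hc : HasFDerivAt (fun z : ZSp e => z.2.1) P21 z := P21.hasFDerivAt
  have hu : HasFDerivAt (fun z : ZSp e => B z.1) ((fderiv ℝ B z.1).comp P1) z :=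
    by exact ((hB.differentiable (by simp) z.1).hasFDerivAt).comp z P1.hasFDerivAt
  have h := hc.clm_apply hu
  show fderiv ℝ (fun z : ZSp e => z.2.1 (B z.1)) z (hatV V W i z) = _
  rw [h.fderiv]
  simp [hatV, lieB, map_sub, P21, P1]
  abel

lemma iterDir_eq {d e : ℕ} {V : Fin d → (Fin e → ℝ) → (Fin e → ℝ)}
    {W : (Fin e → ℝ) → (Fin e → ℝ)} (hV : ∀ i, ContDiff ℝ (⊤ : ℕ∞) (V i))
    (hW : ContDiff ℝ (⊤ : ℕ∞) W) :
    ∀ l : List (Fin d), l ≠ [] → ∀ z : ZSp e,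
      iterDir (hatV V W) (fun z => z.2.2) l z = z.2.1 (iterBracket V W l z.1) := by
  intro l
  induction l with
  | nil => intro h; exact absurd rfl h
  | cons i rest ih =>
    intro _ z
    cases rest with
    | nil =>
      set P23 : ZSp e →L[ℝ] (Fin e → ℝ) :=
        (ContinuousLinearMap.snd ℝ ((Fin e → ℝ) →L[ℝ] (Fin e → ℝ)) (Fin e → ℝ)).comp
          (ContinuousLinearMap.snd ℝ (Fin e → ℝ) (((Fin e → ℝ) →L[ℝ] (Fin e → ℝ)) × (Fin e → ℝ))) with hP23
      have hP : HasFDerivAt (fun z : ZSp e => z.2.2) P23 z := P23.hasFDerivAt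
      show dirD (hatV V W i) (fun z => z.2.2) z = _
      rw [dirD, hP.fderiv]
      simp only [iterBracket]
      rfl
    | cons j rest' =>
      have hfun : iterDir (hatV V W) (fun z => z.2.2) (j :: rest') =
          fun z : ZSp e => z.2.1 (iterBracket V W (j :: rest') z.1) :=
        funext (ih (by simp))
      show dirD (hatV V W i) (iterDir (hatV V W) (fun z => z.2.2) (j :: rest')) z = _
      rw [hfun, dirD_step hV W i (iterBracket_contDiff hV hW _) z]
      rfl


/-- Iterated directional derivatives of the third projection along the augmented vector
fields `V̂ᵢ` produce iterated Lie brackets contracted with `z²`: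
`(V̂_{i₁} ▷ ⋯ (V̂_{i_N} ▷ pr₃)⋯)(z) = z²([V_{i₁}, …, V_{i_N}, W](z¹))`; in particular, at
`z₀ = (y₀, id, W(y₀))` this equals `[V_{i₁}, …, V_{i_N}, W](y₀)`. -/
theorem stmt4 {d e : ℕ} (hd : 1 ≤ d) (he : 1 ≤ e)
    (V : Fin d → (Fin e → ℝ) → (Fin e → ℝ)) (W : (Fin e → ℝ) → (Fin e → ℝ))
    (hV : ∀ i, ContDiff ℝ (⊤ : ℕ∞) (V i)) (hW : ContDiff ℝ (⊤ : ℕ∞) W)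
    (N : ℕ) (hN : 1 ≤ N) (idx : Fin N → Fin d) :
    (∀ z : ZSp e,
        iterDir (hatV V W) (fun z => z.2.2) (List.ofFn idx) z =
          z.2.1 (iterBracket V W (List.ofFn idx) z.1)) ∧
      (∀ y₀ : Fin e → ℝ,
        iterDir (hatV V W) (fun z => z.2.2) (List.ofFn idx)
            (y₀, ContinuousLinearMap.id ℝ (Fin e → ℝ), W y₀) =
          iterBracket V W (List.ofFn idx) y₀) := by
  have hne : List.ofFn idx ≠ [] := by
    simp only [ne_eq, List.ofFn_eq_nil_iff]
    omega
  refine ⟨iterDir_eq hV hW _ hne, fun y₀ => ?_⟩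
  rw [iterDir_eq hV hW _ hne]
  simp
end

section
/- In the tensor algebra A = TensorAlgebra ℝ (ℝ^d), for every m ≥ 1 the ℝ-linear span of the set { π_m( E_m(v₁) * E_m(v₂) * ⋯ * E_m(v_j) ) : j ∈ ℕ, v₁, …, v_j ∈ ℝ^d } equals the entire degree-m homogeneous component of A (i.e. the range of π_m). In other words, the degree-m components of products of truncated exponentials of elements of ℝ^d — the projections to level m of group-like elements of the free nilpotent group — span the full m-th tensor level. -/
open TensorAlgebra

/-- The truncated exponential `E_N(v) = Σ_{m=0}^{N} (1/m!) ι(v)^m` in the tensor algebra. -/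
noncomputable def truncExp {d : ℕ} (N : ℕ) (v : Fin d → ℝ) :
    TensorAlgebra ℝ (Fin d → ℝ) :=
  ∑ m ∈ Finset.range (N + 1), ((m.factorial : ℝ))⁻¹ • TensorAlgebra.ι ℝ v ^ m

/-- The projection onto the degree-`m` homogeneous component of the tensor algebra, for its
standard grading in which `ι(ℝ^d)` is the degree-1 component. -/
noncomputable def degProj (d m : ℕ) :
    TensorAlgebra ℝ (Fin d → ℝ) →ₗ[ℝ] TensorAlgebra ℝ (Fin d → ℝ) :=
  GradedAlgebra.proj
    (fun n : ℕ =>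
      LinearMap.range (TensorAlgebra.ι ℝ : (Fin d → ℝ) →ₗ[ℝ] TensorAlgebra ℝ (Fin d → ℝ)) ^ n)
    m

/-!
The `m`-th level is spanned by the words `ι(v₁) ⋯ ι(vₘ)`. Each factor of
`(E_m(v₁) - 1) ⋯ (E_m(vₘ) - 1)` is `ι(vₜ)` plus terms of degree `≥ 2`, so the degree-`m` part
of this product is exactly `ι(v₁) ⋯ ι(vₘ)`. On the other hand the product lies in the algebra
generated by the truncated exponentials, so it is a linear combination of products of them
(explicitly: inclusion–exclusion over the factors in which `-1` is chosen).
-/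

theorem List.prod_ofFn_sum {R κ : Type*} [Semiring R] [Fintype κ] :
    ∀ {j : ℕ} (g : Fin j → κ → R),
      (List.ofFn fun t => ∑ k, g t k).prod =
        ∑ k : Fin j → κ, (List.ofFn fun t => g t (k t)).prod
  | 0, g => by simp
  | j + 1, g => by
    rw [List.ofFn_succ, List.prod_cons, List.prod_ofFn_sum fun t => g t.succ,
      Fintype.sum_mul_sum, ← (Fin.consEquiv fun _ => κ).sum_comp, Fintype.sum_prod_type]
    simp [List.ofFn_succ, Fin.consEquiv]

theorem Submonoid.exists_ofFn_of_mem_closure_range {M ι : Type*} [Monoid M] {f : ι → M}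
    {x : M} (hx : x ∈ closure (Set.range f)) :
    ∃ j, ∃ w : Fin j → ι, x = (List.ofFn fun t => f (w t)).prod := by
  obtain ⟨l, hl, rfl⟩ := exists_list_of_mem_closure hx
  choose w hw using fun t : Fin l.length => hl _ (l.get_mem t)
  refine ⟨l.length, w, ?_⟩
  conv_lhs => rw [← List.ofFn_get l]
  simp only [hw]

theorem Algebra.adjoin_range_le_span_prod_ofFn {R A ι : Type*} [CommSemiring R] [Semiring A]
    [Algebra R A] (f : ι → A) :
    Subalgebra.toSubmodule (Algebra.adjoin R (Set.range f)) ≤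
      Submodule.span R {x | ∃ j, ∃ w : Fin j → ι, x = (List.ofFn fun t => f (w t)).prod} := by
  rw [Algebra.adjoin_eq_span]
  exact Submodule.span_mono fun _ => Submonoid.exists_ofFn_of_mem_closure_range

theorem LinearMap.range_pow_le_span_prod_ofFn {R M A : Type*} [CommSemiring R]
    [AddCommMonoid M] [Module R M] [Semiring A] [Algebra R A] (f : M →ₗ[R] A) (m : ℕ) :
    LinearMap.range f ^ m ≤
      Submodule.span R {x | ∃ v : Fin m → M, x = (List.ofFn fun t => f (v t)).prod} := by
  rw [Submodule.pow_eq_span_pow_set]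
  refine Submodule.span_mono fun x hx => ?_
  obtain ⟨p, rfl⟩ := Set.mem_pow.mp hx
  choose v hv using fun t => LinearMap.mem_range.mp (p t).2
  exact ⟨v, by simp only [hv]⟩

theorem TensorAlgebra.list_prod_ofFn_smul_ι_pow_mem {R M : Type*} [CommSemiring R]
    [AddCommMonoid M] [Module R M] {j : ℕ} (c : Fin j → R) (v : Fin j → M) (k : Fin j → ℕ) :
    (List.ofFn fun t => c t • ι R (v t) ^ k t).prod ∈
      LinearMap.range (ι R : M →ₗ[R] TensorAlgebra R M) ^ (∑ t, k t) := by
  rw [← List.sum_ofFn]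
  exact SetLike.list_prod_ofFn_mem_graded
    (A := fun n : ℕ => LinearMap.range (ι R : M →ₗ[R] TensorAlgebra R M) ^ n) k _
    fun t => Submodule.smul_mem _ _ (Submodule.pow_mem_pow _ (LinearMap.mem_range_self _ _) _)

section degProj

variable {d m : ℕ}

theorem degProj_mem (x : TensorAlgebra ℝ (Fin d → ℝ)) :
    degProj d m x ∈ LinearMap.range (ι ℝ : (Fin d → ℝ) →ₗ[ℝ] _) ^ m :=
  SetLike.coe_mem _

theorem degProj_of_mem_same {x : TensorAlgebra ℝ (Fin d → ℝ)}
    (hx : x ∈ LinearMap.range (ι ℝ : (Fin d → ℝ) →ₗ[ℝ] _) ^ m) : degProj d m x = x :=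
  DirectSum.decompose_of_mem_same _ hx

theorem degProj_of_mem_ne {n : ℕ} {x : TensorAlgebra ℝ (Fin d → ℝ)}
    (hx : x ∈ LinearMap.range (ι ℝ : (Fin d → ℝ) →ₗ[ℝ] _) ^ n) (hnm : n ≠ m) :
    degProj d m x = 0 :=
  DirectSum.decompose_of_mem_ne _ hx hnm

end degProj

section truncExp

variable {d N : ℕ}

theorem truncExp_sub_one (v : Fin d → ℝ) :
    truncExp N v - 1 = ∑ k : Fin N, (((k + 1 : ℕ).factorial : ℝ))⁻¹ • ι ℝ v ^ (k + 1 : ℕ) := by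
  rw [truncExp, Finset.sum_range_succ', ← Fin.sum_univ_eq_sum_range]
  simp

theorem degProj_prod_truncExp_sub_one (hN : 1 ≤ N) {j : ℕ} (v : Fin j → (Fin d → ℝ)) :
    degProj d j (List.ofFn fun t => truncExp N (v t) - 1).prod =
      (List.ofFn fun t => ι ℝ (v t)).prod := by
  simp_rw [truncExp_sub_one, List.prod_ofFn_sum, map_sum]
  rw [Finset.sum_eq_single fun _ => ⟨0, hN⟩]
  · rw [degProj_of_mem_same (by
      simpa using list_prod_ofFn_smul_ι_pow_mem (fun _ => (1 : ℝ)) v fun _ => 1)]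
    simp
  · intro k _ hk
    refine degProj_of_mem_ne (list_prod_ofFn_smul_ι_pow_mem (R := ℝ) _ v _) ?_
    obtain ⟨t, ht⟩ := Function.ne_iff.mp hk
    have hpos : 0 < ∑ t, (k t : ℕ) := Finset.sum_pos' (fun _ _ => Nat.zero_le _)
      ⟨t, Finset.mem_univ t, Nat.pos_of_ne_zero fun h => ht (Fin.ext h)⟩
    simp only [Finset.sum_add_distrib, Finset.sum_const, Finset.card_univ, Fintype.card_fin,
      smul_eq_mul, mul_one]
    omega
  · simp

theorem list_prod_ofFn_truncExp_sub_one_mem_adjoin {j : ℕ} (v : Fin j → (Fin d → ℝ)) :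
    (List.ofFn fun t => truncExp N (v t) - 1).prod ∈
      Algebra.adjoin ℝ (Set.range (truncExp N)) :=
  Subalgebra.list_prod_mem _ fun x hx => by
    obtain ⟨t, rfl⟩ := List.mem_ofFn.mp hx
    exact sub_mem (Algebra.subset_adjoin ⟨v t, rfl⟩) (one_mem _)

theorem degProj_mem_span_of_mem_adjoin {m : ℕ} {x : TensorAlgebra ℝ (Fin d → ℝ)}
    (hx : x ∈ Algebra.adjoin ℝ (Set.range (truncExp N))) :
    degProj d m x ∈ Submodule.span ℝ {y | ∃ j : ℕ, ∃ v : Fin j → (Fin d → ℝ),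
      y = degProj d m ((List.ofFn fun t : Fin j => truncExp N (v t)).prod)} := by
  have hmap := Submodule.mem_map_of_mem (f := degProj d m)
    (Algebra.adjoin_range_le_span_prod_ofFn (truncExp N) hx)
  rw [Submodule.map_span] at hmap
  refine Submodule.span_mono ?_ hmap
  rintro _ ⟨_, ⟨j, v, rfl⟩, rfl⟩
  exact ⟨j, v, rfl⟩

end truncExp

theorem stmt10_general {d : ℕ} (m : ℕ) (hm : 1 ≤ m) :
    Submodule.span ℝ
        {x : TensorAlgebra ℝ (Fin d → ℝ) |
          ∃ j : ℕ, ∃ v : Fin j → (Fin d → ℝ),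
            x = degProj d m ((List.ofFn fun t : Fin j => truncExp m (v t)).prod)} =
      LinearMap.range (degProj d m) := by
  refine le_antisymm (Submodule.span_le.mpr ?_) ?_
  · rintro _ ⟨j, v, rfl⟩
    exact LinearMap.mem_range_self _ _
  · rintro _ ⟨y, rfl⟩
    refine Submodule.span_le.mpr ?_ ((ι ℝ).range_pow_le_span_prod_ofFn m (degProj_mem y))
    rintro _ ⟨v, rfl⟩
    rw [← degProj_prod_truncExp_sub_one hm]
    exact degProj_mem_span_of_mem_adjoin (list_prod_ofFn_truncExp_sub_one_mem_adjoin v)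

/-- The degree-`m` components of products of truncated exponentials of elements of `ℝ^d` —
the level-`m` projections of group-like elements — span the full `m`-th tensor level,
i.e. the range of the degree-`m` projection. -/
theorem stmt10 {d : ℕ} (hd : 1 ≤ d) (m : ℕ) (hm : 1 ≤ m) :
    Submodule.span ℝ
        {x : TensorAlgebra ℝ (Fin d → ℝ) |
          ∃ j : ℕ, ∃ v : Fin j → (Fin d → ℝ),
            x = degProj d m ((List.ofFn fun t : Fin j => truncExp m (v t)).prod)} =
      LinearMap.range (degProj d m) :=
  stmt10_general m hm
end
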